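/- arXiv:2405.00327 — 2 statements merged into one kernel-verified Lean document; each statement's English description precedes it below -/
import Mathlib

section
/- Let μ ∈ (1,2), x ∈ [0,1), and write γ^{i+1}(x) = b_1⋯b_{i+1} and T^i(x) = T(γ^i(x)). (1) If T^i(x) = [v,u) with v < u, then: if v < 1/2 < u and f^i(x) < 1/2, then T^{i+1}(x) = [f(v), f(1/2)) and b_{i+1} = 0; if v < 1/2 < u and f^i(x) ≥ 1/2, then T^{i+1}(x) = (f(u), f(1/2)] and b_{i+1} = 1; if u ≤ 1/2, then T^{i+1}(x) = [f(v), f(u)) and b_{i+1} = 0; if v ≥ 1/2, then T^{i+1}(x) = (f(u), f(v)] and b_{i+1} = 1. (2) If T^i(x) = (v,u] with v < u, then: if v < 1/2 < u and f^i(x) ≤ 1/2, then T^{i+1}(x) = (f(v), f(1/2)] and b_{i+1} = 1; if v < 1/2 < u and f^i(x) > 1/2, then T^{i+1}(x) = [f(u), f(1/2)) and b_{i+1} = 0; if u ≤ 1/2, then T^{i+1}(x) = (f(v), f(u)] and b_{i+1} = 1; if v ≥ 1/2, then T^{i+1}(x) = [f(u), f(v)) and b_{i+1} = 0. -/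
open Set MeasureTheory

/-- The tent map `f(x) = μx` for `x ≤ 1/2` and `μ(1-x)` for `x ≥ 1/2`. -/
noncomputable def tentMap (μ : ℝ) (x : ℝ) : ℝ :=
  if x ≤ 1/2 then μ * x else μ * (1 - x)

/-- `tentBit μ x k` is the `(k+1)`-st bit `b_{k+1}` of the tent code of `x`. -/
noncomputable def tentBit (μ x : ℝ) : ℕ → Bool
  | 0 => if 1/2 ≤ x then true else false
  | k + 1 =>
    if (tentMap μ)^[k+1] x < 1/2 then tentBit μ x k
    else if 1/2 < (tentMap μ)^[k+1] x then !(tentBit μ x k)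
    else true

/-- The tent code `γ^n(x) = b_1 ⋯ b_n`. -/
noncomputable def tentCode (μ : ℝ) (n : ℕ) (x : ℝ) : List Bool :=
  (List.range n).map (tentBit μ x)

/-- The tent language `L_n = {γ^n(x) : x ∈ [0,1)}`. -/
def tentLang (μ : ℝ) (n : ℕ) : Set (List Bool) :=
  {w | ∃ x ∈ Set.Ico (0:ℝ) 1, tentCode μ n x = w}

/-- The segment-type `T(w) = {f^n(x) : x ∈ [0,1), γ^n(x) = w}`. -/
def segType (μ : ℝ) (n : ℕ) (w : List Bool) : Set ℝ :=
  {y | ∃ x ∈ Set.Ico (0:ℝ) 1, tentCode μ n x = w ∧ (tentMap μ)^[n] x = y}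

/-- The set of segment-types `𝒯_n = {T(w) : w ∈ L_n}`. -/
def typeSet (μ : ℝ) (n : ℕ) : Set (Set ℝ) :=
  {S | ∃ w ∈ tentLang μ n, segType μ n w = S}

/-- `I_i = T(γ^i(1/2))`. -/
noncomputable def Iseg (μ : ℝ) (i : ℕ) : Set ℝ :=
  segType μ i (tentCode μ i (1/2))

/-- `Ī_i = T(c̄_i)` where `c̄_i` is the bitwise complement of `γ^i(1/2)`. -/
noncomputable def Isegbar (μ : ℝ) (i : ℕ) : Set ℝ :=
  segType μ i ((tentCode μ i (1/2)).map (fun b => !b))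

/-- The length of the interval `T(w)` (zero if `T(w)` is empty). -/
noncomputable def segLen (μ : ℝ) (n : ℕ) (w : List Bool) : ℝ :=
  (MeasureTheory.volume (segType μ n w)).toReal

/-!
Cutting the segment-type `T^i(x)` at the turning point `1/2` and keeping the half that contains
`f^i(x)` gives exactly the set of points with the same next code bit; `T^{i+1}(x)` is its image
under `f`, which is linear increasing on `[0, 1/2]` and linear decreasing on `[1/2, 1]`. By
induction, `T^i(x)` is of the form `[v, u)` exactly when `b_i = 0` and `(v, u]` exactly when
`b_i = 1` (with `b_0 = 0`), which is what selects the branch of the update rule for `b_{i+1}`.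
-/

lemma Set.Ico_ne_Ioc {α : Type*} [ConditionallyCompleteLinearOrder α] [DenselyOrdered α]
    {a b c d : α} (hab : a < b) : Ico a b ≠ Ioc c d := by
  intro h
  have hcd : c < d := Set.nonempty_Ioc.mp (h ▸ nonempty_Ico.mpr hab)
  have hac : a = c := by rw [← csInf_Ico hab, h, csInf_Ioc hcd]
  have ha : a ∈ Ioc c d := h ▸ left_mem_Ico.mpr hab
  exact ha.1.ne' hac

lemma Set.Ioc_ne_Ico {α : Type*} [ConditionallyCompleteLinearOrder α] [DenselyOrdered α]
    {a b c d : α} (hab : a < b) : Ioc a b ≠ Ico c d :=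
  fun h => Ico_ne_Ioc (nonempty_Ico.mp (h ▸ nonempty_Ioc.mpr hab)) h.symm

section TentMap

variable {μ v w y : ℝ}

lemma tentMap_of_le_half (h : y ≤ 1/2) : tentMap μ y = μ * y := if_pos h

lemma tentMap_of_half_le (h : 1/2 ≤ y) : tentMap μ y = μ * (1 - y) := by
  rcases h.eq_or_lt with rfl | h
  · rw [tentMap_of_le_half le_rfl]; ring
  · exact if_neg h.not_ge

lemma tentMap_image_Ico_of_le_half (hμ : 0 < μ) (hw : w ≤ 1/2) :
    tentMap μ '' Ico v w = Ico (μ * v) (μ * w) := by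
  rw [← image_mul_left_Ico hμ]
  exact image_congr fun y hy => tentMap_of_le_half (hy.2.le.trans hw)

lemma tentMap_image_Ioc_of_le_half (hμ : 0 < μ) (hw : w ≤ 1/2) :
    tentMap μ '' Ioc v w = Ioc (μ * v) (μ * w) := by
  rw [← image_mul_left_Ioc hμ]
  exact image_congr fun y hy => tentMap_of_le_half (hy.2.trans hw)

lemma tentMap_image_Ico_of_half_le (hμ : 0 < μ) (hv : 1/2 ≤ v) :
    tentMap μ '' Ico v w = Ioc (μ * (1 - w)) (μ * (1 - v)) := by
  rw [← image_mul_left_Ioc hμ, ← image_const_sub_Ico, ← image_comp]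
  exact image_congr fun y hy => tentMap_of_half_le (hv.trans hy.1)

lemma tentMap_image_Ioc_of_half_le (hμ : 0 < μ) (hv : 1/2 ≤ v) :
    tentMap μ '' Ioc v w = Ico (μ * (1 - w)) (μ * (1 - v)) := by
  rw [← image_mul_left_Ico hμ, ← image_const_sub_Ioc, ← image_comp]
  exact image_congr fun y hy => tentMap_of_half_le (hv.trans hy.1.le)

end TentMap

section NextBit

noncomputable def nextBit (b : Bool) (y : ℝ) : Bool :=
  if y < 1/2 then b else if 1/2 < y then !b else true

variable {y : ℝ}

lemma nextBit_false_eq_false_iff : nextBit false y = false ↔ y < 1/2 := by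
  grind [nextBit]

lemma nextBit_false_eq_true_iff : nextBit false y = true ↔ 1/2 ≤ y := by
  grind [nextBit]

lemma nextBit_true_eq_true_iff : nextBit true y = true ↔ y ≤ 1/2 := by
  grind [nextBit]

lemma nextBit_true_eq_false_iff : nextBit true y = false ↔ 1/2 < y := by
  grind [nextBit]

end NextBit

/-- `prevBit μ x n = b_n`, with the convention `b_0 = 0`, under which also `b_1 = nextBit b_0 x`. -/
noncomputable def prevBit (μ x : ℝ) : ℕ → Bool
  | 0 => false
  | k + 1 => tentBit μ x k

section TentCode

variable {μ x z : ℝ} {n : ℕ}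

lemma tentBit_eq_nextBit (μ x : ℝ) (n : ℕ) :
    tentBit μ x n = nextBit (prevBit μ x n) ((tentMap μ)^[n] x) := by
  cases n with
  | zero => grind [prevBit, tentBit, nextBit, Function.iterate_zero_apply]
  | succ k => rfl

lemma tentCode_eq_iff :
    tentCode μ n z = tentCode μ n x ↔ ∀ j < n, tentBit μ z j = tentBit μ x j := by
  simp [tentCode, List.map_inj_left]

lemma tentCode_succ_eq_iff :
    tentCode μ (n+1) z = tentCode μ (n+1) x ↔
      tentCode μ n z = tentCode μ n x ∧ tentBit μ z n = tentBit μ x n := by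
  simp only [tentCode_eq_iff, Nat.lt_succ_iff_lt_or_eq, or_imp, forall_and, forall_eq]

lemma prevBit_eq_of_tentCode_eq (h : tentCode μ n z = tentCode μ n x) :
    prevBit μ z n = prevBit μ x n := by
  cases n with
  | zero => rfl
  | succ k => exact tentCode_eq_iff.mp h k k.lt_succ_self

lemma iterate_mem_segType_tentCode (hx : x ∈ Ico (0:ℝ) 1) (n : ℕ) :
    (tentMap μ)^[n] x ∈ segType μ n (tentCode μ n x) :=
  ⟨x, hx, rfl, rfl⟩

lemma segType_tentCode_zero (μ x : ℝ) : segType μ 0 (tentCode μ 0 x) = Ico 0 1 := by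
  ext y
  simp [segType, tentCode]

/-- Points sharing the first `n` bits with `x` also share `b_n`, so whether they share `b_{n+1}`
is decided by the single rule `nextBit b_n`. -/
lemma segType_tentCode_succ (μ x : ℝ) (n : ℕ) :
    segType μ (n+1) (tentCode μ (n+1) x) =
      tentMap μ '' (segType μ n (tentCode μ n x) ∩
        {y | nextBit (prevBit μ x n) y = tentBit μ x n}) := by
  ext y
  constructor
  · rintro ⟨z, hz, hcode, rfl⟩
    rw [tentCode_succ_eq_iff] at hcode
    refine ⟨(tentMap μ)^[n] z, ⟨⟨z, hz, hcode.1, rfl⟩, ?_⟩,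
      (Function.iterate_succ_apply' _ _ _).symm⟩
    rw [mem_ofPred_eq, ← prevBit_eq_of_tentCode_eq hcode.1, ← tentBit_eq_nextBit]
    exact hcode.2
  · rintro ⟨_, ⟨⟨z, hz, hcode, rfl⟩, hbit⟩, rfl⟩
    refine ⟨z, hz, tentCode_succ_eq_iff.mpr ⟨hcode, ?_⟩, Function.iterate_succ_apply' _ _ _⟩
    rwa [tentBit_eq_nextBit μ z n, prevBit_eq_of_tentCode_eq hcode]

end TentCode

section SegType

variable {μ x v u : ℝ} {i : ℕ}

lemma segType_succ_of_eq_Ico (hμ : 0 < μ) (hseg : segType μ i (tentCode μ i x) = Ico v u)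
    (hprev : prevBit μ x i = false) :
    ((tentMap μ)^[i] x < 1/2 →
        segType μ (i+1) (tentCode μ (i+1) x) = Ico (μ * v) (μ * min u (1/2)) ∧
          tentBit μ x i = false) ∧
      (1/2 ≤ (tentMap μ)^[i] x →
        segType μ (i+1) (tentCode μ (i+1) x) = Ioc (μ * (1 - u)) (μ * (1 - max v (1/2))) ∧
          tentBit μ x i = true) := by
  rw [segType_tentCode_succ, hseg, hprev, tentBit_eq_nextBit, hprev]
  refine ⟨fun h => ?_, fun h => ?_⟩
  · have hb := nextBit_false_eq_false_iff.mpr h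
    simp only [hb, nextBit_false_eq_false_iff, Iio_def, Ico_inter_Iio, and_true]
    exact tentMap_image_Ico_of_le_half hμ (min_le_right _ _)
  · have hb := nextBit_false_eq_true_iff.mpr h
    simp only [hb, nextBit_false_eq_true_iff, Ici_def, Ico_inter_Ici, and_true]
    exact tentMap_image_Ico_of_half_le hμ (le_max_right _ _)

lemma segType_succ_of_eq_Ioc (hμ : 0 < μ) (hseg : segType μ i (tentCode μ i x) = Ioc v u)
    (hprev : prevBit μ x i = true) :
    ((tentMap μ)^[i] x ≤ 1/2 →
        segType μ (i+1) (tentCode μ (i+1) x) = Ioc (μ * v) (μ * min u (1/2)) ∧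
          tentBit μ x i = true) ∧
      (1/2 < (tentMap μ)^[i] x →
        segType μ (i+1) (tentCode μ (i+1) x) = Ico (μ * (1 - u)) (μ * (1 - max v (1/2))) ∧
          tentBit μ x i = false) := by
  rw [segType_tentCode_succ, hseg, hprev, tentBit_eq_nextBit, hprev]
  refine ⟨fun h => ?_, fun h => ?_⟩
  · have hb := nextBit_true_eq_true_iff.mpr h
    simp only [hb, nextBit_true_eq_true_iff, Iic_def, Ioc_inter_Iic, and_true]
    exact tentMap_image_Ioc_of_le_half hμ (min_le_right _ _)
  · have hb := nextBit_true_eq_false_iff.mpr h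
    simp only [hb, nextBit_true_eq_false_iff, Ioi_def, Ioc_inter_Ioi, and_true]
    exact tentMap_image_Ioc_of_half_le hμ (le_max_right _ _)

lemma segType_tentCode_eq_Ico_or_Ioc (hμ : 0 < μ) (x : ℝ) (i : ℕ) :
    (prevBit μ x i = false ∧ ∃ v u, segType μ i (tentCode μ i x) = Ico v u) ∨
      (prevBit μ x i = true ∧ ∃ v u, segType μ i (tentCode μ i x) = Ioc v u) := by
  induction i with
  | zero => exact Or.inl ⟨rfl, 0, 1, segType_tentCode_zero μ x⟩
  | succ i ih =>
    rcases ih with ⟨hprev, v, u, hseg⟩ | ⟨hprev, v, u, hseg⟩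
    · obtain ⟨hlt, hge⟩ := segType_succ_of_eq_Ico hμ hseg hprev
      rcases lt_or_ge ((tentMap μ)^[i] x) (1/2) with h | h
      · exact Or.inl ⟨(hlt h).2, _, _, (hlt h).1⟩
      · exact Or.inr ⟨(hge h).2, _, _, (hge h).1⟩
    · obtain ⟨hle, hgt⟩ := segType_succ_of_eq_Ioc hμ hseg hprev
      rcases le_or_gt ((tentMap μ)^[i] x) (1/2) with h | h
      · exact Or.inr ⟨(hle h).2, _, _, (hle h).1⟩
      · exact Or.inl ⟨(hgt h).2, _, _, (hgt h).1⟩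

lemma prevBit_eq_false_of_segType_eq_Ico (hμ : 0 < μ) (hvu : v < u)
    (hseg : segType μ i (tentCode μ i x) = Ico v u) : prevBit μ x i = false := by
  rcases segType_tentCode_eq_Ico_or_Ioc hμ x i with ⟨hprev, -⟩ | ⟨-, v', u', hseg'⟩
  · exact hprev
  · exact absurd (hseg.symm.trans hseg') (Ico_ne_Ioc hvu)

lemma prevBit_eq_true_of_segType_eq_Ioc (hμ : 0 < μ) (hvu : v < u)
    (hseg : segType μ i (tentCode μ i x) = Ioc v u) : prevBit μ x i = true := by
  rcases segType_tentCode_eq_Ico_or_Ioc hμ x i with ⟨-, v', u', hseg'⟩ | ⟨hprev, -⟩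
  · exact absurd (hseg.symm.trans hseg') (Ioc_ne_Ico hvu)
  · exact hprev

end SegType

theorem segType_transition_general (μ : ℝ) (hμ1 : 1 < μ)
    (x : ℝ) (hx : x ∈ Set.Ico (0:ℝ) 1) (i : ℕ) (v u : ℝ) (hvu : v < u) :
    (segType μ i (tentCode μ i x) = Set.Ico v u →
      ((v < 1/2 → 1/2 < u → (tentMap μ)^[i] x < 1/2 →
          segType μ (i+1) (tentCode μ (i+1) x)
              = Set.Ico (tentMap μ v) (tentMap μ (1/2)) ∧
            tentBit μ x i = false) ∧
       (v < 1/2 → 1/2 < u → 1/2 ≤ (tentMap μ)^[i] x →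
          segType μ (i+1) (tentCode μ (i+1) x)
              = Set.Ioc (tentMap μ u) (tentMap μ (1/2)) ∧
            tentBit μ x i = true) ∧
       (u ≤ 1/2 →
          segType μ (i+1) (tentCode μ (i+1) x)
              = Set.Ico (tentMap μ v) (tentMap μ u) ∧
            tentBit μ x i = false) ∧
       (1/2 ≤ v →
          segType μ (i+1) (tentCode μ (i+1) x)
              = Set.Ioc (tentMap μ u) (tentMap μ v) ∧
            tentBit μ x i = true))) ∧
    (segType μ i (tentCode μ i x) = Set.Ioc v u →
      ((v < 1/2 → 1/2 < u → (tentMap μ)^[i] x ≤ 1/2 →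
          segType μ (i+1) (tentCode μ (i+1) x)
              = Set.Ioc (tentMap μ v) (tentMap μ (1/2)) ∧
            tentBit μ x i = true) ∧
       (v < 1/2 → 1/2 < u → 1/2 < (tentMap μ)^[i] x →
          segType μ (i+1) (tentCode μ (i+1) x)
              = Set.Ico (tentMap μ u) (tentMap μ (1/2)) ∧
            tentBit μ x i = false) ∧
       (u ≤ 1/2 →
          segType μ (i+1) (tentCode μ (i+1) x)
              = Set.Ioc (tentMap μ v) (tentMap μ u) ∧
            tentBit μ x i = true) ∧
       (1/2 ≤ v →
          segType μ (i+1) (tentCode μ (i+1) x)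
              = Set.Ico (tentMap μ u) (tentMap μ v) ∧
            tentBit μ x i = false))) := by
  have hμ : 0 < μ := one_pos.trans hμ1
  have hhalf : tentMap μ (1/2) = μ * (1/2) := tentMap_of_le_half le_rfl
  have hhalf' : tentMap μ (1/2) = μ * (1 - 1/2) := tentMap_of_half_le le_rfl
  refine ⟨fun hseg => ?_, fun hseg => ?_⟩
  · obtain ⟨hlt, hge⟩ := segType_succ_of_eq_Ico hμ hseg
      (prevBit_eq_false_of_segType_eq_Ico hμ hvu hseg)
    have hmem : (tentMap μ)^[i] x ∈ Ico v u := hseg ▸ iterate_mem_segType_tentCode hx i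
    refine ⟨fun hv hu h => ?_, fun hv hu h => ?_, fun hu => ?_, fun hv => ?_⟩
    · rw [tentMap_of_le_half hv.le, hhalf]
      simpa only [min_eq_right hu.le] using hlt h
    · rw [tentMap_of_half_le hu.le, hhalf']
      simpa only [max_eq_right hv.le] using hge h
    · rw [tentMap_of_le_half (hvu.le.trans hu), tentMap_of_le_half hu]
      simpa only [min_eq_left hu] using hlt (hmem.2.trans_le hu)
    · rw [tentMap_of_half_le (hv.trans hvu.le), tentMap_of_half_le hv]
      simpa only [max_eq_left hv] using hge (hv.trans hmem.1)
  · obtain ⟨hle, hgt⟩ := segType_succ_of_eq_Ioc hμ hseg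
      (prevBit_eq_true_of_segType_eq_Ioc hμ hvu hseg)
    have hmem : (tentMap μ)^[i] x ∈ Ioc v u := hseg ▸ iterate_mem_segType_tentCode hx i
    refine ⟨fun hv hu h => ?_, fun hv hu h => ?_, fun hu => ?_, fun hv => ?_⟩
    · rw [tentMap_of_le_half hv.le, hhalf]
      simpa only [min_eq_right hu.le] using hle h
    · rw [tentMap_of_half_le hu.le, hhalf']
      simpa only [max_eq_right hv.le] using hgt h
    · rw [tentMap_of_le_half (hvu.le.trans hu), tentMap_of_le_half hu]
      simpa only [min_eq_left hu] using hle (hmem.2.trans hu)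
    · rw [tentMap_of_half_le (hv.trans hvu.le), tentMap_of_half_le hv]
      simpa only [max_eq_left hv] using hgt (hv.trans_lt hmem.1)

/-- the transition rule for segment-types. -/
theorem segType_transition (μ : ℝ) (hμ1 : 1 < μ) (hμ2 : μ < 2)
    (x : ℝ) (hx : x ∈ Set.Ico (0:ℝ) 1) (i : ℕ) (v u : ℝ) (hvu : v < u) :
    (segType μ i (tentCode μ i x) = Set.Ico v u →
      ((v < 1/2 → 1/2 < u → (tentMap μ)^[i] x < 1/2 →
          segType μ (i+1) (tentCode μ (i+1) x)
              = Set.Ico (tentMap μ v) (tentMap μ (1/2)) ∧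
            tentBit μ x i = false) ∧
       (v < 1/2 → 1/2 < u → 1/2 ≤ (tentMap μ)^[i] x →
          segType μ (i+1) (tentCode μ (i+1) x)
              = Set.Ioc (tentMap μ u) (tentMap μ (1/2)) ∧
            tentBit μ x i = true) ∧
       (u ≤ 1/2 →
          segType μ (i+1) (tentCode μ (i+1) x)
              = Set.Ico (tentMap μ v) (tentMap μ u) ∧
            tentBit μ x i = false) ∧
       (1/2 ≤ v →
          segType μ (i+1) (tentCode μ (i+1) x)
              = Set.Ioc (tentMap μ u) (tentMap μ v) ∧
            tentBit μ x i = true))) ∧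
    (segType μ i (tentCode μ i x) = Set.Ioc v u →
      ((v < 1/2 → 1/2 < u → (tentMap μ)^[i] x ≤ 1/2 →
          segType μ (i+1) (tentCode μ (i+1) x)
              = Set.Ioc (tentMap μ v) (tentMap μ (1/2)) ∧
            tentBit μ x i = true) ∧
       (v < 1/2 → 1/2 < u → 1/2 < (tentMap μ)^[i] x →
          segType μ (i+1) (tentCode μ (i+1) x)
              = Set.Ico (tentMap μ u) (tentMap μ (1/2)) ∧
            tentBit μ x i = false) ∧
       (u ≤ 1/2 →
          segType μ (i+1) (tentCode μ (i+1) x)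
              = Set.Ioc (tentMap μ v) (tentMap μ u) ∧
            tentBit μ x i = true) ∧
       (1/2 ≤ v →
          segType μ (i+1) (tentCode μ (i+1) x)
              = Set.Ico (tentMap μ u) (tentMap μ v) ∧
            tentBit μ x i = false))) :=
  segType_transition_general μ hμ1 x hx i v u hvu
end

section
/- Let μ ∈ (1,2), n ≥ 1, b_n ∈ L_n and b ∈ {0,1}, and let λ denote Lebesgue measure. Writing |T(w)| for the length of the interval T(w), with the convention |T(b_n b')| = 0 whenever b_n b' ∉ L_{n+1}, one has λ({x ∈ [0,1) : γ^{n+1}(x) = b_n b}) · ( |T(b_n 0)| + |T(b_n 1)| ) = λ({x ∈ [0,1) : γ^n(x) = b_n}) · |T(b_n b)|. -/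
open Set MeasureTheory

/-! On each cylinder `{γ^n = w}` the iterate `f^n` is affine with slope `±μ^n`, because the
code records on which side of `1/2` each `f^k x`, `k < n`, lies. Hence
`|T(w)| = μ^n · λ{γ^n = w}`, and `{γ^n = w}` is the disjoint union of `{γ^{n+1} = w0}` and
`{γ^{n+1} = w1}`: both sides of the identity equal `μ^{n+1} λ{γ^{n+1} = wb} λ{γ^n = w}`. -/

open scoped Pointwise

def tentCylinder (μ : ℝ) (n : ℕ) (w : List Bool) : Set ℝ :=
  {x ∈ Ico (0:ℝ) 1 | tentCode μ n x = w}

section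

variable {μ : ℝ}

lemma tentMap_of_le {y : ℝ} (h : y ≤ 1/2) : tentMap μ y = μ * y := if_pos h

lemma tentMap_of_ge {y : ℝ} (h : 1/2 ≤ y) : tentMap μ y = μ * (1 - y) := by
  rcases h.eq_or_lt with rfl | h
  · simp only [tentMap, le_refl, if_true]; ring
  · exact if_neg h.not_ge

lemma measurable_tentMap : Measurable (tentMap μ) :=
  Measurable.ite measurableSet_Iic (measurable_const.mul measurable_id)
    (measurable_const.mul (measurable_const.sub measurable_id))

lemma measurable_tentBit : ∀ k, Measurable fun x => tentBit μ x k
  | 0 => Measurable.ite measurableSet_Ici measurable_const measurable_const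
  | k + 1 => by
    have hf := (measurable_tentMap (μ := μ)).iterate (k + 1)
    exact Measurable.ite (measurableSet_lt hf measurable_const) (measurable_tentBit k)
      (Measurable.ite (measurableSet_lt measurable_const hf)
        ((measurable_from_top (f := not)).comp (measurable_tentBit k)) measurable_const)

lemma tentCode_succ (n : ℕ) (x : ℝ) :
    tentCode μ (n + 1) x = tentCode μ n x ++ [tentBit μ x n] := by
  simp only [tentCode, List.range_succ, List.map_append, List.map_singleton]

lemma tentCode_succ_eq_append_iff {n : ℕ} {x : ℝ} {w : List Bool} {b : Bool} :
    tentCode μ (n + 1) x = w ++ [b] ↔ tentCode μ n x = w ∧ tentBit μ x n = b := by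
  rw [tentCode_succ, ← List.concat_eq_append, ← List.concat_eq_append, List.concat_inj]

lemma tentCode_eq_dropLast {n : ℕ} {x : ℝ} {w : List Bool} (h : tentCode μ (n + 1) x = w) :
    tentCode μ n x = w.dropLast := by
  rw [← h, tentCode_succ, List.dropLast_concat]

lemma tentCylinder_succ_subset (n : ℕ) (w : List Bool) :
    tentCylinder μ (n + 1) w ⊆ tentCylinder μ n w.dropLast :=
  fun _ hx => ⟨hx.1, tentCode_eq_dropLast hx.2⟩

lemma not_iterate_lt_half_lt_of_tentCode_eq {n : ℕ} {x y : ℝ}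
    (h : tentCode μ (n + 1) x = tentCode μ (n + 1) y) :
    ¬((tentMap μ)^[n] x < 1/2 ∧ 1/2 < (tentMap μ)^[n] y) := by
  rintro ⟨hx, hy⟩
  obtain ⟨hcode, hbit⟩ := tentCode_succ_eq_append_iff.mp (h.trans (tentCode_succ n y))
  cases n with
  | zero =>
    simp only [Function.iterate_zero, id_eq] at hx hy
    simp only [tentBit, hx.not_ge, hy.le, if_true, if_false] at hbit
    exact Bool.false_ne_true hbit
  | succ k =>
    have hprev := (tentCode_succ_eq_append_iff.mp (hcode.trans (tentCode_succ k y))).2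
    simp only [tentBit, hx, hy, hy.not_gt, if_true, if_false, hprev] at hbit
    simp at hbit

lemma iterate_le_half_or_ge_half_on_tentCylinder (n : ℕ) (w : List Bool) :
    (∀ x ∈ tentCylinder μ (n + 1) w, (tentMap μ)^[n] x ≤ 1/2) ∨
      ∀ x ∈ tentCylinder μ (n + 1) w, 1/2 ≤ (tentMap μ)^[n] x := by
  by_contra! ⟨⟨x, hx, hxgt⟩, ⟨y, hy, hylt⟩⟩
  exact not_iterate_lt_half_lt_of_tentCode_eq (hy.2.trans hx.2.symm) ⟨hylt, hxgt⟩

lemma exists_iterate_eq_affine_on_tentCylinder (μ : ℝ) (n : ℕ) (w : List Bool) :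
    ∃ a d : ℝ, |a| = |μ| ^ n ∧ ∀ x ∈ tentCylinder μ n w, (tentMap μ)^[n] x = a * x + d := by
  induction n generalizing w with
  | zero => exact ⟨1, 0, by simp, fun x _ => by simp⟩
  | succ n ih =>
    obtain ⟨a, d, ha, haff⟩ := ih w.dropLast
    have hprev := fun x hx => haff x (tentCylinder_succ_subset n w hx)
    rcases iterate_le_half_or_ge_half_on_tentCylinder n w with hside | hside
    · refine ⟨μ * a, μ * d, by rw [abs_mul, ha, pow_succ'], fun x hx => ?_⟩
      rw [Function.iterate_succ_apply', tentMap_of_le (hside x hx), hprev x hx]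
      ring
    · refine ⟨-(μ * a), μ - μ * d, by rw [abs_neg, abs_mul, ha, pow_succ'], fun x hx => ?_⟩
      rw [Function.iterate_succ_apply', tentMap_of_ge (hside x hx), hprev x hx]
      ring

lemma volume_image_affine (a d : ℝ) (s : Set ℝ) :
    volume ((fun y => a * y + d) '' s) = ENNReal.ofReal |a| * volume s := by
  have : (fun y => a * y + d) '' s = (· + d) '' (a • s) := by
    rw [← image_smul, image_image]; rfl
  rw [this, image_add_right, measure_preimage_add_right, Measure.addHaar_smul,
    Module.finrank_self, pow_one]

lemma segType_eq_image (n : ℕ) (w : List Bool) :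
    segType μ n w = (tentMap μ)^[n] '' tentCylinder μ n w := by
  ext y
  simp only [segType, tentCylinder, mem_image, mem_ofPred_eq, and_assoc]

lemma segLen_eq_abs_pow_mul_volume (μ : ℝ) (n : ℕ) (w : List Bool) :
    segLen μ n w = |μ| ^ n * (volume (tentCylinder μ n w)).toReal := by
  obtain ⟨a, d, ha, haff⟩ := exists_iterate_eq_affine_on_tentCylinder μ n w
  rw [segLen, segType_eq_image, image_congr haff, volume_image_affine, ha,
    ENNReal.toReal_mul, ENNReal.toReal_ofReal (by positivity)]

lemma volume_tentCylinder_ne_top (n : ℕ) (w : List Bool) : volume (tentCylinder μ n w) ≠ ⊤ :=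
  ((measure_mono fun _ hx => hx.1).trans_lt (by simp)).ne

lemma tentCylinder_append (n : ℕ) (w : List Bool) (b : Bool) :
    tentCylinder μ (n + 1) (w ++ [b]) = tentCylinder μ n w ∩ {x | tentBit μ x n = b} := by
  ext x
  simp only [tentCylinder, mem_inter_iff, mem_ofPred_eq, tentCode_succ_eq_append_iff, and_assoc]

lemma volume_tentCylinder_toReal_eq_add (μ : ℝ) (n : ℕ) (w : List Bool) :
    (volume (tentCylinder μ n w)).toReal =
      (volume (tentCylinder μ (n + 1) (w ++ [false]))).toReal +
        (volume (tentCylinder μ (n + 1) (w ++ [true]))).toReal := by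
  have hmeas : MeasurableSet {x | tentBit μ x n = true} :=
    measurable_tentBit n (measurableSet_singleton true)
  rw [← ENNReal.toReal_add (volume_tentCylinder_ne_top _ _) (volume_tentCylinder_ne_top _ _),
    tentCylinder_append, tentCylinder_append, add_comm, ← measure_inter_add_sdiff _ hmeas]
  congr 3
  ext x
  simp

end

theorem tent_code_cond_prob_general (μ : ℝ) (n : ℕ) (w : List Bool) (b : Bool) :
    (volume {x ∈ Set.Ico (0:ℝ) 1 | tentCode μ (n+1) x = w ++ [b]}).toReal *
        (segLen μ (n+1) (w ++ [false]) + segLen μ (n+1) (w ++ [true])) =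
      (volume {x ∈ Set.Ico (0:ℝ) 1 | tentCode μ n x = w}).toReal *
        segLen μ (n+1) (w ++ [b]) := by
  change (volume (tentCylinder μ (n + 1) (w ++ [b]))).toReal * _ =
    (volume (tentCylinder μ n w)).toReal * _
  rw [segLen_eq_abs_pow_mul_volume, segLen_eq_abs_pow_mul_volume, segLen_eq_abs_pow_mul_volume, volume_tentCylinder_toReal_eq_add μ n w]
  ring

/-- the conditional-probability identity
`λ({γ^{n+1} = b_n b}) · (|T(b_n 0)| + |T(b_n 1)|) = λ({γ^n = b_n}) · |T(b_n b)|`. -/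
theorem tent_code_cond_prob (μ : ℝ) (hμ1 : 1 < μ) (hμ2 : μ < 2)
    (n : ℕ) (hn : 1 ≤ n) (w : List Bool) (hw : w ∈ tentLang μ n) (b : Bool) :
    (volume {x ∈ Set.Ico (0:ℝ) 1 | tentCode μ (n+1) x = w ++ [b]}).toReal *
        (segLen μ (n+1) (w ++ [false]) + segLen μ (n+1) (w ++ [true])) =
      (volume {x ∈ Set.Ico (0:ℝ) 1 | tentCode μ n x = w}).toReal *
        segLen μ (n+1) (w ++ [b]) :=
  tent_code_cond_prob_general μ n w b
end
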